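/- Let H be a connected graph of order n₁ and let G = H ∘ K₁ be the corona of H with K₁ (obtained by attaching one pendant vertex to each vertex of H). Then for α ∈ [0,1], the characteristic polynomial of A_α(G) equals ∏_{i=1}^{n₁} (x² − (2α + μ_i)x + α(μ_i + 2) − 1), where μ_1, …, μ_{n₁} are the eigenvalues of A_α(H). -/

import Mathlib

/-- The `A_α`-matrix of a graph: `α·D(G) + (1-α)·A(G)`. -/
noncomputable def Aalpha {V : Type*} [Fintype V] [DecidableEq V]
    (α : ℝ) (G : SimpleGraph V) [DecidableRel G.Adj] : Matrix V V ℝ :=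
  α • Matrix.diagonal (fun v => (G.degree v : ℝ)) + (1 - α) • G.adjMatrix ℝ

lemma Aalpha_isHermitian {V : Type*} [Fintype V] [DecidableEq V]
    (α : ℝ) (G : SimpleGraph V) [DecidableRel G.Adj] : (Aalpha α G).IsHermitian := by
  apply Matrix.IsHermitian.ext
  intro i j
  by_cases h : G.Adj i j <;> by_cases hij : i = j <;>
    simp_all [Aalpha, Matrix.diagonal_apply, SimpleGraph.adj_comm, eq_comm]

/-- The corona `H ∘ K₁`: one new pendant vertex `inr v` attached to each vertex `inl v`
of `H`. -/
def corona {m : ℕ} (H : SimpleGraph (Fin m)) : SimpleGraph (Fin m ⊕ Fin m) where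
  Adj x y :=
    match x, y with
    | Sum.inl u, Sum.inl v => H.Adj u v
    | Sum.inl u, Sum.inr v => u = v
    | Sum.inr u, Sum.inl v => v = u
    | Sum.inr _, Sum.inr _ => False
  symm := ⟨by rintro (u | u) (v | v) h <;> simp_all [SimpleGraph.adj_comm]⟩
  loopless := ⟨by rintro (u | u) h <;> simp_all⟩

instance coronaDecidable {m : ℕ} (H : SimpleGraph (Fin m)) [DecidableRel H.Adj] :
    DecidableRel (corona H).Adj := fun x y =>
  match x, y with
  | Sum.inl u, Sum.inl v => inferInstanceAs (Decidable (H.Adj u v))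
  | Sum.inl u, Sum.inr v => inferInstanceAs (Decidable (u = v))
  | Sum.inr u, Sum.inl v => inferInstanceAs (Decidable (v = u))
  | Sum.inr _, Sum.inr _ => inferInstanceAs (Decidable False)
/-!
Ordering the vertices of `H ∘ K₁` as `inl` (the vertices of `H`) before `inr` (the pendant
vertices), `A_α(H ∘ K₁)` is the block matrix `[[A_α(H) + αI, (1-α)I], [(1-α)I, αI]]`.
Conjugating by `diag(U, U)`, where `U` is an orthogonal matrix diagonalising `A_α(H)`, makes all
four blocks diagonal, and such a matrix is, up to a permutation of coordinates, the direct sum of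
the `2 × 2` matrices `[[μᵢ + α, 1-α], [1-α, α]]`, whose characteristic polynomials are the factors.
-/

open Matrix Polynomial

section BlockCharpoly

variable {n R : Type*} [Fintype n] [DecidableEq n] [CommRing R]

theorem det_fromBlocks_diagonal (a b c d : n → R) :
    (fromBlocks (diagonal a) (diagonal b) (diagonal c) (diagonal d)).det =
      ∏ i, (a i * d i - b i * c i) := by
  let e : Fin 2 × n ≃ n ⊕ n := (finTwoEquiv.prodCongr (.refl n)).trans (.boolProdEquivSum n)
  have hblock : (fromBlocks (diagonal a) (diagonal b) (diagonal c) (diagonal d)).submatrix e e =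
      blockDiagonal fun i => !![a i, b i; c i, d i] := by
    ext ⟨x, i⟩ ⟨y, j⟩
    fin_cases x <;> fin_cases y <;> by_cases hij : i = j <;>
      simp [e, finTwoEquiv, Equiv.boolProdEquivSum, blockDiagonal_apply, hij]
  rw [← det_submatrix_equiv_self e, hblock, det_blockDiagonal]
  simp [det_fin_two]

theorem charpoly_fromBlocks_diagonal (a b c d : n → R) :
    (fromBlocks (diagonal a) (diagonal b) (diagonal c) (diagonal d)).charpoly =
      ∏ i, ((X - C (a i)) * (X - C (d i)) - C (b i * c i)) := by
  rw [charpoly, charmatrix_fromBlocks, charmatrix_diagonal, charmatrix_diagonal,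
    diagonal_map (map_zero _), diagonal_map (map_zero _), diagonal_neg, diagonal_neg,
    det_fromBlocks_diagonal]
  simp

theorem charpoly_fromBlocks_conj (U V P Q S T : Matrix n n R) (h : V * U = 1) :
    (fromBlocks (U * P * V) (U * Q * V) (U * S * V) (U * T * V)).charpoly =
      (fromBlocks P Q S T).charpoly := by
  have hconj : fromBlocks (U * P * V) (U * Q * V) (U * S * V) (U * T * V) =
      fromBlocks U 0 0 U * fromBlocks P Q S T * fromBlocks V 0 0 V := by
    simp [fromBlocks_multiply, Matrix.mul_assoc]
  rw [hconj, charpoly_mul_comm, ← Matrix.mul_assoc, fromBlocks_multiply]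
  simp [h, fromBlocks_one]

theorem Matrix.IsHermitian.charpoly_fromBlocks_add_smul_one {𝕜 : Type*} [RCLike 𝕜]
    {A : Matrix n n 𝕜} (hA : A.IsHermitian) (a b c d : 𝕜) :
    (Matrix.fromBlocks (A + a • 1) (b • 1 : Matrix n n 𝕜) (c • 1) (d • 1)).charpoly =
      ∏ i, ((X - C ((hA.eigenvalues i : 𝕜) + a)) * (X - C d) - C (b * c)) := by
  set U : Matrix n n 𝕜 := ↑hA.eigenvectorUnitary
  have hU : U ∈ unitary (Matrix n n 𝕜) := hA.eigenvectorUnitary.2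
  have hscalar (x : 𝕜) : x • (1 : Matrix n n 𝕜) = U * diagonal (fun _ => x) * star U := by
    rw [← smul_one_eq_diagonal, mul_smul_comm, smul_mul_assoc, mul_one,
      Unitary.mul_star_self_of_mem hU]
  have hdiag : A + a • 1 = U * diagonal (fun i => (hA.eigenvalues i : 𝕜) + a) * star U :=
    calc A + a • 1 = U * diagonal (RCLike.ofReal ∘ hA.eigenvalues) * star U +
          U * diagonal (fun _ => a) * star U := by
          rw [← hscalar]
          congr 1
          exact hA.spectral_theorem
      _ = _ := by rw [← add_mul, ← mul_add, diagonal_add]; rfl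
  rw [hdiag, hscalar b, hscalar c, hscalar d,
    charpoly_fromBlocks_conj _ _ _ _ _ _ (Unitary.star_mul_self_of_mem hU),
    charpoly_fromBlocks_diagonal]

end BlockCharpoly

section Corona

variable {m : ℕ} (H : SimpleGraph (Fin m))

@[simp] theorem corona_adj_inl_inl (u v : Fin m) :
    (corona H).Adj (.inl u) (.inl v) ↔ H.Adj u v := Iff.rfl

@[simp] theorem corona_adj_inl_inr (u v : Fin m) :
    (corona H).Adj (.inl u) (.inr v) ↔ u = v := Iff.rfl

@[simp] theorem corona_adj_inr_inl (u v : Fin m) :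
    (corona H).Adj (.inr u) (.inl v) ↔ v = u := Iff.rfl

@[simp] theorem corona_adj_inr_inr (u v : Fin m) :
    ¬(corona H).Adj (.inr u) (.inr v) := id

variable [DecidableRel H.Adj]

theorem corona_degree_inl (v : Fin m) : (corona H).degree (.inl v) = H.degree v + 1 := by
  have hnbhd : (corona H).neighborFinset (.inl v) =
      insert (.inr v) ((H.neighborFinset v).map .inl) := by
    ext (u | u) <;> simp [eq_comm]
  rw [SimpleGraph.degree, hnbhd, Finset.card_insert_of_notMem (by simp), Finset.card_map,
    SimpleGraph.degree]

theorem corona_degree_inr (v : Fin m) : (corona H).degree (.inr v) = 1 := by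
  have hnbhd : (corona H).neighborFinset (.inr v) = {.inl v} := by
    ext (u | u) <;> simp [eq_comm]
  rw [SimpleGraph.degree, hnbhd, Finset.card_singleton]

theorem Aalpha_corona (α : ℝ) :
    Aalpha α (corona H) =
      fromBlocks (Aalpha α H + α • 1) ((1 - α) • 1) ((1 - α) • 1) (α • 1) := by
  ext (i | i) (j | j) <;> rcases eq_or_ne i j with rfl | hij <;>
    simp [Aalpha, corona_degree_inl, corona_degree_inr, one_apply, mul_add, eq_comm, *]

end Corona

open Polynomial in
theorem Aalpha_corona_charpoly_general (n₁ : ℕ) (H : SimpleGraph (Fin n₁)) [DecidableRel H.Adj]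
    (α : ℝ) :
    (Aalpha α (corona H)).charpoly =
      ∏ i : Fin n₁,
        (X ^ 2 - C (2 * α + (Aalpha_isHermitian α H).eigenvalues i) * X +
          C (α * ((Aalpha_isHermitian α H).eigenvalues i + 2) - 1)) := by
  rw [Aalpha_corona, (Aalpha_isHermitian α H).charpoly_fromBlocks_add_smul_one]
  refine Finset.prod_congr rfl fun i _ => ?_
  simp only [RCLike.ofReal_real_eq_id, id, map_add, map_sub, map_mul, map_one, map_ofNat]
  ring

open Polynomial in
/-- The characteristic polynomial of `A_α(H ∘ K₁)` equals
`∏_{i=1}^{n₁} (x² − (2α + μ_i)x + α(μ_i + 2) − 1)` where the `μ_i` are the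
eigenvalues of `A_α(H)`. -/
theorem Aalpha_corona_charpoly (n₁ : ℕ) (H : SimpleGraph (Fin n₁)) [DecidableRel H.Adj]
    (hconn : H.Connected) (α : ℝ) (hα0 : 0 ≤ α) (hα1 : α ≤ 1) :
    (Aalpha α (corona H)).charpoly =
      ∏ i : Fin n₁,
        (X ^ 2 - C (2 * α + (Aalpha_isHermitian α H).eigenvalues i) * X +
          C (α * ((Aalpha_isHermitian α H).eigenvalues i + 2) - 1)) :=
  Aalpha_corona_charpoly_general n₁ H α
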